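/- arXiv:1407.5552 — 2 statements merged into one kernel-verified Lean document; each statement's English description precedes it below -/
import Mathlib

section
/- Let p be an odd prime and let n, r be positive integers. Then Q_{p^r}(n) = ⌈(1/2)·⌊(n−1)/(p^r−1)⌋⌉ − δ, where δ = 1 if p^r divides n and δ = 0 otherwise, when n is odd; and Q_{p^r}(n) = 0 when n is even. -/
/-- `q n` is the number of partitions of `n` into odd parts. -/
def q (n : ℕ) : ℕ := (Nat.Partition.odds n).card

/-- The multinomial coefficient of a partition: if the part `i` occurs with
multiplicity `t_i`, it equals `(∑ t_i)! / ∏ (t_i)!`. -/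
def partitionMultinomial {n : ℕ} (c : n.Partition) : ℕ :=
  Nat.multinomial c.parts.toFinset fun i => Multiset.count i c.parts

/-- `Q k n` is the number of partitions of `n` into odd parts whose
multinomial coefficient equals `k`. -/
def Q (k n : ℕ) : ℕ :=
  ((Nat.Partition.odds n).filter fun c => partitionMultinomial c = k).card

/-!
A multinomial coefficient splits as `C(T, tᵢ)` times the multinomial coefficient of the other
parts, where `T = ∑ tⱼ`; so when it equals `p ^ r` every `C(T, tᵢ)` is a power of `p`. As
`p ^ e ∣ C(T, t)` forces `p ^ e ≤ T`, Pascal's rule leaves only `t ∈ {1, T - 1}`. With three or more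
distinct parts all multiplicities are then `1` and the coefficient is `T!`, which is even. Hence the
partitions counted by `Q (p ^ r) n` are `a + b + ⋯ + b` with `p ^ r - 1` copies of `b ≠ a`; they are
parametrised by the odd `b` with `(p ^ r - 1) b < n` and `p ^ r b ≠ n`, and `a = n - (p ^ r - 1) b`
is odd exactly when `n` is.
-/

open Finset

namespace Nat

theorem self_le_choose {m k : ℕ} (hk0 : 0 < k) (hkm : k < m) : m ≤ m.choose k := by
  induction m generalizing k with
  | zero => omega
  | succ m ih =>
    obtain ⟨j, rfl⟩ : ∃ j, k = j + 1 := ⟨k - 1, by omega⟩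
    rcases lt_or_ge (j + 1) m with hjm | hjm
    · have := ih hk0 hjm
      have := choose_pos (show j ≤ m by omega)
      rw [choose_succ_succ']
      omega
    · obtain rfl : j + 1 = m := by omega
      rw [choose_succ_self_right]

theorem choose_eq_prime_pow_iff {p r m k : ℕ} (hp : p.Prime) (hk0 : 0 < k) (hkm : k < m) :
    m.choose k = p ^ r ↔ m = p ^ r ∧ (k = 1 ∨ k = m - 1) := by
  have hchoose : k = 1 ∨ k = m - 1 → m.choose k = m := by
    rintro (rfl | rfl)
    · exact choose_one_right m
    · rw [choose_symm (by omega), choose_one_right]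
  refine ⟨fun h => ?_, fun ⟨hm, hk⟩ => (hchoose hk).trans hm⟩
  have hle : p ^ r ≤ m := by
    simpa [h, hp.factorization_pow] using
      pow_factorization_choose_le (p := p) (n := m) (k := k) (by omega)
  have hk : k = 1 ∨ k = m - 1 := by
    by_contra! hk
    obtain ⟨m, rfl⟩ : ∃ m', m = m' + 1 := ⟨m - 1, by omega⟩
    obtain ⟨k, rfl⟩ : ∃ k', k = k' + 1 := ⟨k - 1, by omega⟩
    -- Pascal's rule writes `p ^ r` as a sum of two binomial coefficients, each at least `m`.
    have h₁ := self_le_choose (m := m) (k := k) (by omega) (by omega)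
    have h₂ := self_le_choose (m := m) (k := k + 1) (by omega) (by omega)
    rw [choose_succ_succ'] at h
    omega
  exact ⟨(hchoose hk).symm.trans h, hk⟩

theorem exists_pair_of_multinomial_eq_odd_prime_pow {α : Type*} [DecidableEq α] {p r : ℕ}
    {s : Finset α} {f : α → ℕ} (hp : p.Prime) (hpodd : Odd p) (hr : 0 < r)
    (hf : ∀ i ∈ s, 0 < f i) (h : multinomial s f = p ^ r) :
    ∃ a b, a ≠ b ∧ s = {a, b} ∧ f a = 1 ∧ f b = p ^ r - 1 := by
  have hpr : 1 < p ^ r := one_lt_pow hr.ne' hp.one_lt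
  have hone : ∀ i ∈ s, 2 ≤ ∑ j ∈ s.erase i, f j → f i = 1 := by
    intro i hi hrest
    have hdvd : (∑ j ∈ s, f j).choose (f i) ∣ p ^ r := by
      rw [← h, ← insert_erase hi, multinomial_insert (notMem_erase i s),
        sum_insert (notMem_erase i s)]
      exact dvd_mul_right _ _
    obtain ⟨e, -, he⟩ := (Nat.dvd_prime_pow hp).1 hdvd
    have hsum := add_sum_erase s f hi
    have := (choose_eq_prime_pow_iff hp (hf i hi) (by omega)).1 he
    omega
  rcases lt_trichotomy s.card 2 with hcard | hcard | hcard
  · interval_cases hs : s.card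
    · simp [Finset.card_eq_zero.1 hs] at h
      omega
    · obtain ⟨a, rfl⟩ := card_eq_one.1 hs
      simp at h
      omega
  · obtain ⟨a, b, hab, rfl⟩ := card_eq_two.1 hcard
    rw [binomial_eq_choose hab] at h
    have ha := hf a (by simp)
    have hb := hf b (by simp)
    obtain ⟨hsum, h1 | h1⟩ := (choose_eq_prime_pow_iff hp ha (by omega)).1 h
    · exact ⟨a, b, hab, rfl, h1, by omega⟩
    · exact ⟨b, a, hab.symm, pair_comm a b, by omega, by omega⟩
  · -- With three or more distinct parts every multiplicity is `1`, so the multinomial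
    -- coefficient is `(card s)!`, which is even.
    have hf1 : ∀ i ∈ s, f i = 1 := fun i hi => hone i hi <| by
      have : (s.erase i).card ≤ ∑ j ∈ s.erase i, f j := by
        simpa using card_nsmul_le_sum (s.erase i) f 1 fun j hj => hf j (mem_of_mem_erase hj)
      rw [card_erase_of_mem hi] at this
      omega
    have hfact : multinomial s f = s.card ! := by
      have := multinomial_spec s f
      rwa [prod_congr rfl fun i hi => by rw [hf1 i hi], sum_congr rfl hf1, factorial_one,
        prod_const_one, one_mul, sum_const, smul_eq_mul, mul_one] at this
    have heven : Even (p ^ r) := h ▸ hfact ▸ (even_iff_two_dvd.2 (dvd_factorial two_pos hcard.le))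
    exact absurd heven (Nat.not_even_iff_odd.2 hpodd.pow)

end Nat

namespace Multiset

variable {α : Type*}

theorem cons_replicate_inj {a a' b b' : α} {M : ℕ} (hM : 2 ≤ M) :
    a ::ₘ replicate M b = a' ::ₘ replicate M b' ↔ a = a' ∧ b = b' := by
  classical
  refine ⟨fun h => ?_, fun ⟨ha, hb⟩ => ha ▸ hb ▸ rfl⟩
  have hb : b = b' := by
    by_contra hne
    -- `b` occurs at least twice on the left but at most once on the right.
    have := congrArg (count b) h
    rw [count_cons, count_cons, count_replicate_self, count_replicate, if_neg (Ne.symm hne)] at this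
    split_ifs at this <;> omega
  subst hb
  exact ⟨(cons_inj_left _).1 h, rfl⟩

variable [DecidableEq α]

theorem multinomial_count_cons_replicate {a b : α} (hab : a ≠ b) (M : ℕ) :
    Nat.multinomial (a ::ₘ replicate M b).toFinset (count · (a ::ₘ replicate M b)) = M + 1 := by
  have ha : count a (a ::ₘ replicate M b) = 1 := by
    rw [count_cons_self, count_eq_zero.2 fun h => hab (eq_of_mem_replicate h)]
  rw [Nat.multinomial_congr_of_sdiff (t := {a, b}) ?_
      (fun x hx => count_eq_zero.2 (mt mem_toFinset.2 (Finset.mem_sdiff.1 hx).2)) fun _ _ => rfl,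
    Nat.binomial_one hab ha, count_cons_of_ne hab.symm, count_replicate_self]
  intro x hx
  simp only [mem_toFinset, mem_cons, mem_replicate] at hx
  simp only [Finset.mem_insert, Finset.mem_singleton]
  tauto

theorem multinomial_count_eq_odd_prime_pow_iff {p r : ℕ} (hp : p.Prime) (hpodd : Odd p)
    (hr : 0 < r) {P : Multiset α} :
    Nat.multinomial P.toFinset (count · P) = p ^ r ↔
      ∃ a b, a ≠ b ∧ P = a ::ₘ replicate (p ^ r - 1) b := by
  constructor
  · intro h
    obtain ⟨a, b, hab, hs, ha, hb⟩ := Nat.exists_pair_of_multinomial_eq_odd_prime_pow hp hpodd hr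
      (fun i hi => count_pos.2 (mem_toFinset.1 hi)) h
    refine ⟨a, b, hab, ext.2 fun x => ?_⟩
    rw [count_cons, count_replicate]
    by_cases hx : x ∈ P.toFinset
    · rw [hs, Finset.mem_insert, Finset.mem_singleton] at hx
      rcases hx with rfl | rfl
      · simp [ha, hab.symm]
      · simp [hb, hab.symm]
    · have hxab : x ≠ a ∧ x ≠ b := by simp_all
      simp [count_eq_zero.2 (mt mem_toFinset.2 hx), hxab.1, Ne.symm hxab.2]
  · rintro ⟨a, b, hab, rfl⟩
    have : 1 < p ^ r := Nat.one_lt_pow hr.ne' hp.one_lt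
    rw [multinomial_count_cons_replicate hab]
    omega

end Multiset

namespace Nat.Partition

theorem mem_odds {n : ℕ} {c : n.Partition} : c ∈ odds n ↔ ∀ i ∈ c.parts, Odd i := by
  simp [odds, restricted]

theorem odd_of_parts_eq_cons_replicate {n M a b : ℕ} {c : n.Partition} (hMeven : Even M)
    (hc : c ∈ odds n) (h : c.parts = a ::ₘ Multiset.replicate M b) : Odd n := by
  have ha : Odd a := mem_odds.1 hc a (h ▸ Multiset.mem_cons_self a _)
  have hsum := c.parts_sum
  rw [h, Multiset.sum_cons, Multiset.sum_replicate, smul_eq_mul] at hsum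
  exact hsum ▸ ha.add_even (hMeven.mul_right b)

end Nat.Partition

open Nat.Partition

theorem card_filter_odd_range_succ (K : ℕ) :
    (#{b ∈ range (K + 1) | Odd b} : ℤ) = ⌈(K : ℚ) / 2⌉ := by
  have := Nat.count_modEq_card_eq_ceil (b := K + 1) two_pos 1
  rw [Nat.count_eq_card_filter_range] at this
  convert this using 3
  · exact filter_congr fun x _ => Nat.odd_iff
  all_goals push_cast; ring

section TwoParts

variable {n M : ℕ}

open scoped Classical in
theorem card_odds_filter_parts_eq_cons_replicate (hM : 2 ≤ M) (hMeven : Even M) (hn : Odd n) :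
    #{c ∈ odds n | ∃ a b, a ≠ b ∧ c.parts = a ::ₘ Multiset.replicate M b} =
      #{b ∈ range ((n - 1) / M + 1) | Odd b ∧ (M + 1) * b ≠ n} := by
  have hmem : ∀ b, b ∈ range ((n - 1) / M + 1) ↔ M * b < n := fun b => by
    rw [mem_range, Nat.lt_succ_iff, Nat.le_div_iff_mul_le (by omega), mul_comm]
    have := hn.pos
    omega
  symm
  refine card_bij (fun b hb => ⟨(n - M * b) ::ₘ Multiset.replicate M b, ?_, ?_⟩)
    (fun b hb => ?_) (fun b₁ _ b₂ _ h => ((Multiset.cons_replicate_inj hM).1 (congrArg parts h)).2)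
    (fun c hc => ?_)
  · obtain ⟨hb, hodd, -⟩ := mem_filter.1 hb
    have := (hmem b).1 hb
    have := hodd.pos
    intro i hi
    simp only [Multiset.mem_cons, Multiset.mem_replicate] at hi
    omega
  · have := (hmem b).1 (mem_filter.1 hb).1
    rw [Multiset.sum_cons, Multiset.sum_replicate, smul_eq_mul]
    omega
  · obtain ⟨hb, hodd, hne⟩ := mem_filter.1 hb
    have := (hmem b).1 hb
    refine mem_filter.2 ⟨mem_odds.2 fun i hi => ?_, n - M * b, b, by grind, rfl⟩
    simp only [Multiset.mem_cons, Multiset.mem_replicate] at hi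
    rcases hi with rfl | ⟨-, rfl⟩
    · exact Nat.Odd.sub_even this.le hn (hMeven.mul_right b)
    · exact hodd
  · obtain ⟨hodd, a, b, hab, hc⟩ := mem_filter.1 hc
    have ha : 0 < a := c.parts_pos (hc ▸ Multiset.mem_cons_self a _)
    have hsum := c.parts_sum
    rw [hc, Multiset.sum_cons, Multiset.sum_replicate, smul_eq_mul] at hsum
    have hb : b ∈ c.parts :=
      hc ▸ Multiset.mem_cons_of_mem (Multiset.mem_replicate.2 ⟨by omega, rfl⟩)
    refine ⟨b, mem_filter.2 ⟨(hmem b).2 (by omega), mem_odds.1 hodd b hb, by grind⟩, ?_⟩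
    exact Nat.Partition.ext (by simp only [hc, ← hsum, Nat.add_sub_cancel])

theorem card_filter_odd_mul_ne (hM : 0 < M) (hn : Odd n) :
    (#{b ∈ range ((n - 1) / M + 1) | Odd b ∧ (M + 1) * b ≠ n} : ℤ) =
      #{b ∈ range ((n - 1) / M + 1) | Odd b} - if M + 1 ∣ n then 1 else 0 := by
  split_ifs with hdvd
  · obtain ⟨b₀, rfl⟩ := hdvd
    have hodd : Odd b₀ := (Nat.odd_mul.1 hn).2
    have hb₀ : b₀ ∈ {b ∈ range (((M + 1) * b₀ - 1) / M + 1) | Odd b} := by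
      refine mem_filter.2 ⟨mem_range.2 (Nat.lt_succ_of_le ((Nat.le_div_iff_mul_le hM).2 ?_)), hodd⟩
      have : (M + 1) * b₀ = b₀ * M + b₀ := by ring
      have := hodd.pos
      omega
    have hset : {b ∈ range (((M + 1) * b₀ - 1) / M + 1) | Odd b ∧ (M + 1) * b ≠ (M + 1) * b₀} =
        {b ∈ range (((M + 1) * b₀ - 1) / M + 1) | Odd b}.erase b₀ := by
      ext b
      simp only [mem_filter, mem_erase, ne_eq, Nat.mul_left_cancel_iff (Nat.succ_pos M)]
      tauto
    rw [hset, card_erase_of_mem hb₀, Nat.cast_pred (card_pos.2 ⟨b₀, hb₀⟩)]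
  · rw [sub_zero, Nat.cast_inj]
    exact congrArg card (filter_congr fun b _ => and_iff_left fun h => hdvd ⟨b, h.symm⟩)

end TwoParts

theorem Q_prime_pow_odd (p n r : ℕ) (hp : p.Prime) (hpodd : Odd p)
    (hn : 0 < n) (hr : 0 < r) :
    (Odd n → (Q (p ^ r) n : ℤ) =
      ⌈(⌊((n : ℚ) - 1) / ((p : ℚ) ^ r - 1)⌋ : ℚ) / 2⌉ -
        (if p ^ r ∣ n then 1 else 0)) ∧
    (Even n → Q (p ^ r) n = 0) := by
  classical
  obtain ⟨M, hpM⟩ : ∃ M, p ^ r = M + 1 :=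
    ⟨p ^ r - 1, (Nat.succ_pred_eq_of_pos (pow_pos hp.pos r)).symm⟩
  have hM : 2 ≤ M := by
    have := Nat.le_self_pow hr.ne' p
    have := hp.two_le
    have := hpodd.pow (n := r)
    grind
  have hMeven : Even M := by
    have := hpodd.pow (n := r)
    rwa [hpM, Nat.odd_add_one, Nat.not_odd_iff_even] at this
  have hQ : Q (p ^ r) n = #{c ∈ odds n | ∃ a b, a ≠ b ∧ c.parts = a ::ₘ Multiset.replicate M b} :=
    congrArg card <| filter_congr fun c _ => by
      rw [partitionMultinomial, Multiset.multinomial_count_eq_odd_prime_pow_iff hp hpodd hr, hpM,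
        Nat.add_sub_cancel]
  refine ⟨fun hn_odd => ?_, fun hn_even => ?_⟩
  · have hfloor : ⌊((n : ℚ) - 1) / ((p : ℚ) ^ r - 1)⌋ = ((n - 1) / M : ℕ) := by
      rw [show (p : ℚ) ^ r - 1 = M by rw [← Nat.cast_pow, hpM]; push_cast; ring, ← Nat.cast_pred hn,
        Rat.floor_natCast_div_natCast, Int.natCast_div]
    rw [hQ, card_odds_filter_parts_eq_cons_replicate hM hMeven hn_odd,
      card_filter_odd_mul_ne (by omega) hn_odd, card_filter_odd_range_succ, hfloor,
      Int.cast_natCast, hpM]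
  · rw [hQ, card_eq_zero, filter_eq_empty_iff]
    rintro c hc ⟨a, b, -, hparts⟩
    exact Nat.not_odd_iff_even.2 hn_even (odd_of_parts_eq_cons_replicate hMeven hc hparts)
end

section
/- Let k and n be nonnegative integers with n > 2k. Then ∑_{j=0}^{k} C(k,j) · q(n−k−j) ≤ F_n, where C(k,j) is the binomial coefficient. -/
/-- `q' m` is the number of partitions of `m` into odd parts, extended by
`q' m = 0` for `m < 0` (and `q' 0 = 1`). -/
def q' (m : ℤ) : ℕ := if 0 ≤ m then (Nat.Partition.odds m.toNat).card else 0

/-!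
The odd-part partition numbers satisfy `q(n+2) ≤ q(n+1) + q(n)`: a partition of `n+2` containing
a part `1` loses it, and one without a `1` has all parts at least `3`, so lowering its least part
by `2` gives a partition of `n` whose least part is the lowered one; both maps are injective.
Since `q(1) = q(2) = 1`, this gives `q(n) ≤ F(n)` for `n ≥ 1`. Pascal's rule splits the sum for
`(k+1, n+2)` into the sums for `(k, n+1)` and `(k, n)`, matching the Fibonacci recurrence, and
`n > 2k` keeps every index in the range `n ≥ 1` where `q ≤ F` holds.
-/

open Finset

lemma q'_natCast (n : ℕ) : q' n = #(Nat.Partition.odds n) := by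
  simp [q']

namespace Multiset

noncomputable def lowerMin (d : ℕ) (s : Multiset ℕ) : Multiset ℕ :=
  (sInf {i | i ∈ s} - d) ::ₘ s.erase (sInf {i | i ∈ s})

variable {d : ℕ} {s : Multiset ℕ}

lemma sInf_mem_of_ne_zero (hs : s ≠ 0) : sInf {i | i ∈ s} ∈ s :=
  Nat.sInf_mem (exists_mem_of_ne_zero hs)

lemma sInf_lowerMin : sInf {i | i ∈ s.lowerMin d} = sInf {i | i ∈ s} - d := by
  refine le_antisymm (Nat.sInf_le (mem_cons_self _ _)) (le_csInf ⟨_, mem_cons_self _ _⟩ ?_)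
  intro i hi
  rcases mem_cons.1 hi with rfl | hi
  · rfl
  · exact tsub_le_self.trans (Nat.sInf_le (mem_of_mem_erase hi))

lemma sum_lowerMin_add (hs : s ≠ 0) (hd : ∀ i ∈ s, d ≤ i) :
    (s.lowerMin d).sum + d = s.sum := by
  have hmin := sInf_mem_of_ne_zero hs
  rw [lowerMin, sum_cons, ← sum_erase hmin]
  have := hd _ hmin
  omega

lemma injOn_lowerMin (d : ℕ) : Set.InjOn (lowerMin d) {s | s ≠ 0 ∧ ∀ i ∈ s, d ≤ i} := by
  rintro s ⟨hs, hsd⟩ t ⟨ht, htd⟩ hst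
  have hmin : sInf {i | i ∈ s} = sInf {i | i ∈ t} := by
    have h := congrArg (fun u => sInf {i | i ∈ u}) hst
    simp only [sInf_lowerMin] at h
    have := hsd _ (sInf_mem_of_ne_zero hs)
    have := htd _ (sInf_mem_of_ne_zero ht)
    omega
  rw [lowerMin, lowerMin, hmin, cons_inj_right] at hst
  calc s = sInf {i | i ∈ s} ::ₘ s.erase (sInf {i | i ∈ s}) :=
        (cons_erase (sInf_mem_of_ne_zero hs)).symm
    _ = sInf {i | i ∈ t} ::ₘ t.erase (sInf {i | i ∈ t}) := by rw [hmin, hst]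
    _ = t := cons_erase (sInf_mem_of_ne_zero ht)

end Multiset

namespace Nat.Partition

lemma mem_odds_iff {n : ℕ} {p : n.Partition} : p ∈ odds n ↔ ∀ i ∈ p.parts, Odd i := by
  simp [odds, restricted]

lemma mem_image_parts_odds {n : ℕ} {s : Multiset ℕ} :
    s ∈ (odds n).image parts ↔ (∀ i ∈ s, Odd i) ∧ s.sum = n := by
  constructor
  · intro h
    obtain ⟨p, hp, rfl⟩ := mem_image.1 h
    exact ⟨mem_odds_iff.1 hp, p.parts_sum⟩
  · rintro ⟨hodd, rfl⟩
    exact mem_image.2 ⟨⟨s, fun hi => (hodd _ hi).pos, rfl⟩, mem_odds_iff.2 hodd, rfl⟩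

lemma card_image_parts_odds (n : ℕ) : #((odds n).image parts) = #(odds n) :=
  Finset.card_image_of_injective _ fun _ _ => Nat.Partition.ext

lemma card_filter_mem_parts_odds_le (a n : ℕ) :
    #{p ∈ odds (n + a) | a ∈ p.parts} ≤ #(odds n) := by
  rw [← card_image_parts_odds]
  refine card_le_card_of_injOn (fun p => p.parts.erase a) (fun p hp => ?_) (fun p hp q hq h => ?_)
  · simp only [coe_filter, Set.mem_ofPred_eq, mem_odds_iff] at hp
    dsimp only
    refine mem_image_parts_odds.2 ⟨fun i hi => hp.1 i (Multiset.mem_of_mem_erase hi), ?_⟩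
    have := Multiset.sum_erase hp.2
    rw [p.parts_sum] at this
    omega
  · simp only [coe_filter, Set.mem_ofPred_eq] at hp hq
    ext1
    rw [← Multiset.cons_erase hp.2, ← Multiset.cons_erase hq.2]
    exact congrArg _ h

lemma card_filter_one_notMem_parts_odds_le (n : ℕ) :
    #{p ∈ odds (n + 2) | 1 ∉ p.parts} ≤ #(odds n) := by
  have hdom : ∀ p ∈ ({p ∈ odds (n + 2) | 1 ∉ p.parts} : Finset _),
      p.parts ∈ {s : Multiset ℕ | s ≠ 0 ∧ ∀ i ∈ s, 2 ≤ i} := by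
    intro p hp
    rw [mem_filter, mem_odds_iff] at hp
    refine ⟨fun h0 => by simpa [h0] using p.parts_sum, fun i hi => ?_⟩
    have := Nat.odd_iff.1 (hp.1 i hi)
    have : i ≠ 1 := by rintro rfl; exact hp.2 hi
    omega
  rw [← card_image_parts_odds]
  refine card_le_card_of_injOn (fun p => p.parts.lowerMin 2) (fun p hp => ?_)
    (fun p hp q hq h => Nat.Partition.ext (Multiset.injOn_lowerMin 2 (hdom p hp) (hdom q hq) h))
  obtain ⟨hne, hge⟩ := hdom p hp
  have hodd := mem_odds_iff.1 (mem_filter.1 hp).1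
  dsimp only
  refine mem_image_parts_odds.2 ⟨fun i hi => ?_, ?_⟩
  · rcases Multiset.mem_cons.1 hi with rfl | hi
    · have hmin := Multiset.sInf_mem_of_ne_zero hne
      exact Nat.Odd.sub_even (hge _ hmin) (hodd _ hmin) even_two
    · exact hodd i (Multiset.mem_of_mem_erase hi)
  · have := Multiset.sum_lowerMin_add hne hge
    rw [p.parts_sum] at this
    omega

theorem card_odds_add_two_le (n : ℕ) : #(odds (n + 2)) ≤ #(odds (n + 1)) + #(odds n) := by
  rw [← card_filter_add_card_filter_not (fun p => 1 ∈ p.parts)]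
  exact add_le_add (card_filter_mem_parts_odds_le 1 (n + 1))
    (card_filter_one_notMem_parts_odds_le n)

lemma card_odds_one_le : #(odds 1) ≤ 1 :=
  (card_le_univ _).trans Fintype.card_unique.le

lemma parts_eq_of_mem_odds_two {p : Nat.Partition 2} (hp : p ∈ odds 2) :
    p.parts = Multiset.replicate 2 1 := by
  have hone : ∀ i ∈ p.parts, i = 1 := fun i hi => by
    have := Nat.odd_iff.1 (mem_odds_iff.1 hp i hi)
    have := le_of_mem_parts hi
    omega
  have hrep := Multiset.eq_replicate_of_mem hone
  have hcard := p.parts_sum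
  rw [hrep, Multiset.sum_replicate, smul_eq_mul, mul_one] at hcard
  rwa [hcard] at hrep

theorem card_odds_le_fib : ∀ n, #(odds (n + 1)) ≤ fib (n + 1)
  | 0 => card_odds_one_le
  | 1 => card_le_one.2 fun p hp q hq =>
      Nat.Partition.ext ((parts_eq_of_mem_odds_two hp).trans (parts_eq_of_mem_odds_two hq).symm)
  | n + 2 => by
    have := card_odds_add_two_le (n + 1)
    have := card_odds_le_fib n
    have := card_odds_le_fib (n + 1)
    rw [show n + 2 + 1 = n + 1 + 2 from rfl, fib_add_two]
    omega

end Nat.Partition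

theorem sum_choose_q_le_fib (k n : ℕ) (h : 2 * k < n) :
    ∑ j ∈ Finset.range (k + 1), k.choose j * q' ((n : ℤ) - k - j) ≤ Nat.fib n := by
  induction k generalizing n with
  | zero =>
    obtain ⟨m, rfl⟩ : ∃ m, n = m + 1 := ⟨n - 1, by omega⟩
    simp only [zero_add, sum_range_one, Nat.choose_zero_right, one_mul, Nat.cast_zero, sub_zero,
      q'_natCast]
    exact Nat.Partition.card_odds_le_fib m
  | succ k ih =>
    obtain ⟨m, rfl⟩ : ∃ m, n = m + 2 := ⟨n - 2, by omega⟩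
    have pascal :=
      sum_choose_succ_mul (R := ℕ) (fun j _ => q' ((m + 2 : ℕ) - (k + 1 : ℕ) - j)) k
    simp only [Nat.cast_id] at pascal
    calc _ = ∑ j ∈ range (k + 1), k.choose j * q' ((m + 1 : ℕ) - k - j)
          + ∑ j ∈ range (k + 1), k.choose j * q' ((m : ℕ) - k - j) := by
          rw [pascal]
          congr 1 <;> refine sum_congr rfl fun j _ => ?_ <;> congr 2 <;> push_cast <;> ring
      _ ≤ Nat.fib (m + 1) + Nat.fib m := add_le_add (ih _ (by omega)) (ih _ (by omega))
      _ = Nat.fib (m + 2) := by rw [Nat.fib_add_two, add_comm]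
end
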